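/- The equilateral classes form a subgroup of order 3 equal to the intersection of the three isosceles subgroups: letting ω = e^{2πi/3}, one has {(z,z²) : z ∈ S¹} ∩ {(z²,z) : z ∈ S¹} ∩ {(z,z⁻¹) : z ∈ S¹} = {(1,1), (ω,ω²), (ω²,ω)}, this set is a subgroup of S¹ × S¹ with exactly 3 elements, and it is generated by the element (ω,ω²), which has order 3. -/
import Mathlib
open Real

noncomputable def omega : Circle := Circle.exp (2 * π / 3)

lemma circle_exp_pow (x : ℝ) (n : ℕ) : Circle.exp x ^ n = Circle.exp (n * x) := by
  induction n with
  | zero => simp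
  | succ k ih => rw [pow_succ, ih, ← Circle.exp_add, Nat.cast_succ]; ring_nf

lemma omega_pow_three : omega ^ 3 = 1 := by
  rw [omega, circle_exp_pow]
  norm_num
  rw [show (3:ℝ) * (2 * π / 3) = 2 * π by ring, Circle.exp_two_pi]

lemma omega_ne_one : omega ≠ 1 := by
  intro h
  rw [omega, Circle.exp_eq_one] at h
  obtain ⟨n, hn⟩ := h
  have hπ := pi_pos
  have h3 : (3 * n : ℝ) = 1 := by
    field_simp at hn
    nlinarith
  have : (3 * n : ℤ) = 1 := by exact_mod_cast h3
  omega

lemma omega_inv : omega⁻¹ = omega ^ 2 := by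
  rw [inv_eq_of_mul_eq_one_right]
  rw [← pow_succ']
  exact omega_pow_three

lemma cube_root (z : Circle) (h : z ^ 3 = 1) : z = 1 ∨ z = omega ∨ z = omega ^ 2 := by
  have hz : z = Circle.exp (Complex.arg z) := (Circle.exp_arg z).symm
  set t := Complex.arg z with ht
  rw [hz, circle_exp_pow, Circle.exp_eq_one] at h
  obtain ⟨n, hn⟩ := h
  have htv : t = n * (2 * π) / 3 := by push_cast at hn ⊢; linarith
  obtain ⟨q, r, hr0, hr3, hnqr⟩ : ∃ q r : ℤ, 0 ≤ r ∧ r < 3 ∧ n = 3 * q + r :=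
    ⟨n / 3, n % 3, Int.emod_nonneg n (by norm_num), Int.emod_lt_of_pos n (by norm_num),
      (Int.mul_ediv_add_emod n 3).symm⟩
  have key : z = Circle.exp (r * (2 * π) / 3) := by
    rw [hz, htv, hnqr]
    push_cast
    rw [show ((3 * (q:ℝ) + r) * (2 * π) / 3) = q * (2 * π) + r * (2*π)/3 by ring,
      Circle.exp_add, Circle.exp_int_mul_two_pi, one_mul]
  interval_cases r
  · left; simpa using key
  · right; left; rw [key, omega]; norm_num
  · right; right; rw [key, omega, circle_exp_pow]; norm_num; ring_nf

lemma omega_sq_inv : (omega ^ 2)⁻¹ = omega := by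
  rw [inv_eq_of_mul_eq_one_right]
  rw [← pow_succ]
  exact omega_pow_three

lemma omega_pow_four : omega ^ 4 = omega := by
  rw [show (4:ℕ) = 3 + 1 by rfl, pow_add, omega_pow_three, one_mul, pow_one]

theorem equilateral_classes_form_subgroup_of_order_three :
    ({p : Circle × Circle | ∃ z : Circle, p = (z, z ^ 2)} ∩
        {p : Circle × Circle | ∃ z : Circle, p = (z ^ 2, z)} ∩
        {p : Circle × Circle | ∃ z : Circle, p = (z, z⁻¹)} =
      {(1, 1), (omega, omega ^ 2), (omega ^ 2, omega)}) ∧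
    (({(1, 1), (omega, omega ^ 2), (omega ^ 2, omega)} : Set (Circle × Circle)) =
      ↑(Subgroup.zpowers ((omega, omega ^ 2) : Circle × Circle))) ∧
    Nat.card (Subgroup.zpowers ((omega, omega ^ 2) : Circle × Circle)) = 3 ∧
    orderOf ((omega, omega ^ 2) : Circle × Circle) = 3 := by
  have hω3 := omega_pow_three
  have horder : orderOf ((omega, omega ^ 2) : Circle × Circle) = 3 := by
    have : Fact (Nat.Prime 3) := ⟨by norm_num⟩
    refine orderOf_eq_prime ?_ ?_
    · rw [Prod.pow_mk, hω3, ← pow_mul]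
      rw [show 2 * 3 = 3 * 2 by rfl, pow_mul, hω3, one_pow]
      rfl
    · intro h
      exact omega_ne_one (congrArg Prod.fst h)
  have hg3 : ((omega, omega ^ 2) : Circle × Circle) ^ 3 = 1 := by
    rw [← horder]; exact pow_orderOf_eq_one _
  refine ⟨?_, ?_, ?_, horder⟩
  · ext ⟨x, y⟩
    constructor
    · rintro ⟨⟨⟨z, hz⟩, -⟩, ⟨u, hu⟩⟩
      simp only [Prod.mk.injEq] at hz hu
      obtain ⟨rfl, rfl⟩ := hz
      obtain ⟨rfl, h2⟩ := hu
      have hz3 : x ^ 3 = 1 := by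
        rw [show (3:ℕ) = 2 + 1 by rfl, pow_add, h2, pow_one, inv_mul_cancel]
      rcases cube_root x hz3 with rfl | rfl | rfl
      · left; simp
      · right; left; rfl
      · right; right; simp only [Set.mem_singleton_iff, Prod.mk.injEq]
        refine ⟨trivial, ?_⟩
        rw [← pow_mul, show 2 * 2 = 4 by rfl, omega_pow_four]
    · intro h
      rcases h with h | h | h <;> rw [show ((x,y) : Circle × Circle) = _ from h]
      · exact ⟨⟨⟨1, by simp⟩, ⟨1, by simp⟩⟩, ⟨1, by simp⟩⟩
      · refine ⟨⟨⟨omega, rfl⟩, ⟨omega ^ 2, ?_⟩⟩, ⟨omega, by rw [omega_inv]⟩⟩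
        rw [← pow_mul, show 2 * 2 = 4 by rfl, omega_pow_four]
      · refine ⟨⟨⟨omega ^ 2, ?_⟩, ⟨omega, rfl⟩⟩, ⟨omega ^ 2, by rw [omega_sq_inv]⟩⟩
        rw [← pow_mul, show 2 * 2 = 4 by rfl, omega_pow_four]
  · ext ⟨x, y⟩
    simp only [SetLike.mem_coe, Subgroup.mem_zpowers_iff]
    constructor
    · intro h
      rcases h with h | h | h <;> rw [show ((x,y) : Circle × Circle) = _ from h]
      · exact ⟨0, rfl⟩
      · exact ⟨1, zpow_one _⟩
      · refine ⟨2, ?_⟩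
        rw [show (2:ℤ) = (2:ℕ) by rfl, zpow_natCast, Prod.pow_mk, ← pow_mul,
          show 2 * 2 = 4 by rfl, omega_pow_four]
    · rintro ⟨k, hk⟩
      obtain ⟨q, r, hr0, hr3, rfl⟩ : ∃ q r : ℤ, 0 ≤ r ∧ r < 3 ∧ k = 3 * q + r :=
        ⟨k / 3, k % 3, Int.emod_nonneg k (by norm_num), Int.emod_lt_of_pos k (by norm_num),
          (Int.mul_ediv_add_emod k 3).symm⟩
      have hred : ((omega, omega ^ 2) : Circle × Circle) ^ (3 * q + r) =
          ((omega, omega ^ 2) : Circle × Circle) ^ r := by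
        rw [zpow_add, zpow_mul, show ((3:ℤ)) = ((3:ℕ):ℤ) by rfl, zpow_natCast, hg3,
          one_zpow, one_mul]
      rw [hred] at hk
      interval_cases r
      · left; simp at hk; exact hk.symm
      · right; left; rw [← hk, zpow_one]
      · right; right
        simp only [Set.mem_singleton_iff]
        rw [← hk, show (2:ℤ) = (2:ℕ) by rfl, zpow_natCast, Prod.pow_mk, ← pow_mul,
          show 2 * 2 = 4 by rfl, omega_pow_four]
  · rw [Nat.card_zpowers, horder]
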